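/- arXiv:1810.12772 — 2 statements merged into one kernel-verified Lean document; each statement's English description precedes it below -/
import Mathlib

section
/- Let n ≥ 1 be an integer, let t ∈ ℝ, h > 0, and let b₁, …, b_n ∈ [0, 1). Then, writing s₀ := t, the integral of the function s ↦ ∏_{j=1}^n (s_j − s_{j−1})^{−b_j} over the simplex {s ∈ ℝⁿ : t < s₁ < s₂ < ⋯ < s_n < t + h} (with respect to n-dimensional Lebesgue measure) equals h^{n − (b₁ + ⋯ + b_n)} · (∏_{j=1}^n Γ(1 − b_j)) / Γ(n + 1 − (b₁ + ⋯ + b_n)). -/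
/-!
With `αⱼ = 1 - bⱼ > 0`, integrate out the first point `s₁ = x` by Fubini. The remaining points
range over the simplex `{x < s₂ < ⋯ < sₙ < t + h}` of the same shape, so by induction the inner
integral is `(t + h - x) ^ (α₂ + ⋯ + αₙ)` times a Gamma ratio, and the outer integral over
`x ∈ (t, t + h)` is a Beta integral `B(α₁, α₂ + ⋯ + αₙ + 1)`.
-/

open MeasureTheory Set ProbabilityTheory

theorem intervalIntegral_rpow_mul_rpow_sub {p q c : ℝ} (hp : 0 < p) (hq : 0 < q) (hc : 0 < c) :
    ∫ x in (0 : ℝ)..c, x ^ (p - 1) * (c - x) ^ (q - 1) = c ^ (p + q - 1) * beta p q := by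
  apply Complex.ofReal_injective
  have hcpow : ∀ x ∈ uIcc 0 c, ((x ^ (p - 1) * (c - x) ^ (q - 1) : ℝ) : ℂ)
      = (x : ℂ) ^ ((p : ℂ) - 1) * ((c : ℂ) - x) ^ ((q : ℂ) - 1) := by
    intro x hx
    rw [uIcc_of_le hc.le] at hx
    push_cast [Complex.ofReal_cpow hx.1, Complex.ofReal_cpow (sub_nonneg.2 hx.2)]
    rfl
  rw [← intervalIntegral.integral_ofReal, intervalIntegral.integral_congr hcpow,
    Complex.betaIntegral_scaled _ _ hc, beta,
    Complex.betaIntegral_eq_Gamma_mul_div _ _ (by simpa) (by simpa)]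
  push_cast [Complex.ofReal_cpow hc.le, ← Complex.Gamma_ofReal]
  rfl

theorem setLIntegral_Ioo_sub_rpow_mul_sub_rpow {p q a b : ℝ} (hp : 0 < p) (hq : 0 < q)
    (hab : a < b) :
    ∫⁻ x in Ioo a b, ENNReal.ofReal ((x - a) ^ (p - 1) * (b - x) ^ (q - 1))
      = ENNReal.ofReal ((b - a) ^ (p + q - 1) * beta p q) := by
  have hval : ∫ x in Ioo a b, (x - a) ^ (p - 1) * (b - x) ^ (q - 1)
      = (b - a) ^ (p + q - 1) * beta p q := by
    rw [← integral_Ioc_eq_integral_Ioo, ← intervalIntegral.integral_of_le hab.le,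
      ← intervalIntegral_rpow_mul_rpow_sub hp hq (sub_pos.2 hab),
      ← sub_self a, ← intervalIntegral.integral_comp_sub_right]
    simp only [sub_sub_sub_cancel_right]
  have hpos : 0 < (b - a) ^ (p + q - 1) * beta p q :=
    mul_pos (Real.rpow_pos_of_pos (sub_pos.2 hab) _) (beta_pos hp hq)
  -- A nonzero integral certifies integrability.
  rw [← hval,
    ofReal_integral_eq_lintegral_ofReal (Integrable.of_integral_ne_zero (hval ▸ hpos.ne'))]
  filter_upwards [ae_restrict_mem measurableSet_Ioo] with x hx
  exact mul_nonneg (Real.rpow_nonneg (sub_nonneg.2 hx.1.le) _)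
    (Real.rpow_nonneg (sub_nonneg.2 hx.2.le) _)

theorem lintegral_fin_cons {α : Type*} [MeasureSpace α] [SigmaFinite (volume : Measure α)]
    {n : ℕ} {f : (Fin (n + 1) → α) → ENNReal} (hf : Measurable f) :
    ∫⁻ u, f u = ∫⁻ x, ∫⁻ y, f (Fin.cons x y) := by
  have e := (volume_preserving_piFinSuccAbove (fun _ : Fin (n + 1) => α) 0).symm
  rw [← e.lintegral_comp hf, Measure.volume_eq_prod,
    lintegral_prod (fun z => f _) (hf.comp (MeasurableEquiv.measurable _)).aemeasurable]
  simp [MeasurableEquiv.piFinSuccAbove_symm_apply, Fin.insertNthEquiv, Fin.insertNth_zero']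

def orderedSimplex (n : ℕ) (a b : ℝ) : Set (Fin n → ℝ) :=
  {s | StrictMono s ∧ ∀ j, s j ∈ Ioo a b}

/-- `Fin.cons a s j.castSucc` is `s (j - 1)`, with `a` in place of `s (-1)`. -/
def increments {n : ℕ} (a : ℝ) (s : Fin n → ℝ) (j : Fin n) : ℝ :=
  s j - (Fin.cons a s : Fin (n + 1) → ℝ) j.castSucc

@[simp]
theorem increments_cons_zero {n : ℕ} (a x : ℝ) (y : Fin n → ℝ) :
    increments a (Fin.cons x y) 0 = x - a := rfl

@[simp]
theorem increments_cons_succ {n : ℕ} (a x : ℝ) (y : Fin n → ℝ) (j : Fin n) :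
    increments a (Fin.cons x y) j.succ = increments x y j := by
  simp [increments]

theorem increments_eq_sub_dite {n : ℕ} (a : ℝ) (s : Fin n → ℝ) (j : Fin n) :
    increments a s j =
      s j - if (j : ℕ) = 0 then a else s ⟨(j : ℕ) - 1, (Nat.sub_le _ _).trans_lt j.isLt⟩ := by
  cases n with
  | zero => exact j.elim0
  | succ n =>
    induction j using Fin.cases with
    | zero => rfl
    | succ i => simp [increments]; rfl

@[fun_prop]
theorem measurable_increments {n : ℕ} (a : ℝ) (j : Fin n) :
    Measurable fun s : Fin n → ℝ => increments a s j := by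
  unfold increments
  fun_prop

theorem increments_pos {n : ℕ} {a b : ℝ} {s : Fin n → ℝ} (hs : s ∈ orderedSimplex n a b)
    (j : Fin n) : 0 < increments a s j := by
  have hmono : StrictMono (Fin.cons a s : Fin (n + 1) → ℝ) :=
    Fin.strictMono_cons.2 ⟨fun j => (hs.2 j).1, hs.1⟩
  simpa [increments] using hmono (Fin.castSucc_lt_succ (i := j))

theorem measurableSet_orderedSimplex (n : ℕ) (a b : ℝ) :
    MeasurableSet (orderedSimplex n a b) := by
  have : orderedSimplex n a b
      = (⋂ (i) (j) (_ : i < j), {s | s i < s j}) ∩ ⋂ j, {s | s j ∈ Ioo a b} := by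
    ext s; simp [orderedSimplex, StrictMono]
  rw [this]
  exact (MeasurableSet.iInter fun i => .iInter fun j => .iInter fun _ =>
      measurableSet_lt (measurable_pi_apply i) (measurable_pi_apply j)).inter
    (.iInter fun j => measurable_pi_apply j measurableSet_Ioo)

theorem cons_mem_orderedSimplex_iff {n : ℕ} {a b x : ℝ} {y : Fin n → ℝ} :
    Fin.cons x y ∈ orderedSimplex (n + 1) a b ↔ x ∈ Ioo a b ∧ y ∈ orderedSimplex n x b := by
  simp only [orderedSimplex, mem_ofPred_eq, Fin.strictMono_cons, Fin.forall_fin_succ,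
    Fin.cons_zero, Fin.cons_succ]
  constructor
  · rintro ⟨⟨hxy, hmono⟩, hx, hy⟩
    exact ⟨hx, hmono, fun j => ⟨hxy j, (hy j).2⟩⟩
  · rintro ⟨hx, hmono, hy⟩
    exact ⟨⟨fun j => (hy j).1, hmono⟩, hx, fun j => ⟨hx.1.trans (hy j).1, (hy j).2⟩⟩

theorem setLIntegral_orderedSimplex_succ {n : ℕ} (a b : ℝ) {f : (Fin (n + 1) → ℝ) → ENNReal}
    (hf : Measurable f) :
    ∫⁻ s in orderedSimplex (n + 1) a b, f s
      = ∫⁻ x in Ioo a b, ∫⁻ y in orderedSimplex n x b, f (Fin.cons x y) := by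
  rw [← lintegral_indicator (measurableSet_orderedSimplex _ _ _),
    lintegral_fin_cons (hf.indicator (measurableSet_orderedSimplex _ _ _)),
    ← lintegral_indicator measurableSet_Ioo]
  refine lintegral_congr fun x => ?_
  by_cases hx : x ∈ Ioo a b
  · rw [indicator_of_mem hx, ← lintegral_indicator (measurableSet_orderedSimplex _ _ _)]
    refine lintegral_congr fun y => ?_
    by_cases hy : y ∈ orderedSimplex n x b
    · rw [indicator_of_mem (cons_mem_orderedSimplex_iff.2 ⟨hx, hy⟩), indicator_of_mem hy]
    · rw [indicator_of_notMem (fun h => hy (cons_mem_orderedSimplex_iff.1 h).2),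
        indicator_of_notMem hy]
  · simp [indicator, cons_mem_orderedSimplex_iff, hx]

theorem lintegral_orderedSimplex_prod_increments_rpow {n : ℕ} {α : Fin n → ℝ}
    (hα : ∀ j, 0 < α j) {a b : ℝ} (hab : a < b) :
    ∫⁻ s in orderedSimplex n a b, ∏ j, ENNReal.ofReal (increments a s j ^ (α j - 1))
      = ENNReal.ofReal ((b - a) ^ (∑ j, α j) * (∏ j, Real.Gamma (α j)) /
          Real.Gamma (∑ j, α j + 1)) := by
  induction n generalizing a with
  | zero =>
    have : orderedSimplex 0 a b = univ := by
      ext s; simp [orderedSimplex, Subsingleton.strictMono]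
    simp [this, volume_pi]
  | succ n ih =>
    have hA : 0 ≤ ∑ j, α (Fin.succ j) := Finset.sum_nonneg fun j _ => (hα j.succ).le
    have hΓ : 0 < Real.Gamma (∑ j, α (Fin.succ j) + 1) := Real.Gamma_pos_of_pos (by linarith)
    have hC : 0 ≤ (∏ j, Real.Gamma (α (Fin.succ j))) / Real.Gamma (∑ j, α (Fin.succ j) + 1) :=
      div_nonneg (Finset.prod_nonneg fun j _ => (Real.Gamma_pos_of_pos (hα j.succ)).le) hΓ.le
    have hinner : ∀ x ∈ Ioo a b,
        ∫⁻ y in orderedSimplex n x b, ENNReal.ofReal ((x - a) ^ (α 0 - 1)) *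
            ∏ j, ENNReal.ofReal (increments x y j ^ (α (Fin.succ j) - 1))
          = ENNReal.ofReal ((∏ j, Real.Gamma (α (Fin.succ j))) /
              Real.Gamma (∑ j, α (Fin.succ j) + 1)) *
            ENNReal.ofReal ((x - a) ^ (α 0 - 1) * (b - x) ^ (∑ j, α (Fin.succ j) + 1 - 1)) := by
      intro x hx
      rw [lintegral_const_mul _ (by fun_prop), ih (fun j => hα j.succ) hx.2,
        ← ENNReal.ofReal_mul (Real.rpow_nonneg (sub_nonneg.2 hx.1.le) _),
        ← ENNReal.ofReal_mul hC, add_sub_cancel_right]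
      ring_nf
    rw [setLIntegral_orderedSimplex_succ a b (by fun_prop)]
    simp only [Fin.prod_univ_succ, increments_cons_zero, increments_cons_succ]
    rw [setLIntegral_congr_fun measurableSet_Ioo hinner,
      lintegral_const_mul' _ _ ENNReal.ofReal_ne_top,
      setLIntegral_Ioo_sub_rpow_mul_sub_rpow (hα 0) (by linarith) hab, ← ENNReal.ofReal_mul hC,
      Fin.sum_univ_succ, beta, add_sub_assoc, add_sub_cancel_right, ← add_assoc]
    field_simp

theorem integral_orderedSimplex_prod_increments_rpow {n : ℕ} {α : Fin n → ℝ}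
    (hα : ∀ j, 0 < α j) {a b : ℝ} (hab : a < b) :
    ∫ s in orderedSimplex n a b, ∏ j, increments a s j ^ (α j - 1)
      = (b - a) ^ (∑ j, α j) * (∏ j, Real.Gamma (α j)) / Real.Gamma (∑ j, α j + 1) := by
  have hS := measurableSet_orderedSimplex n a b
  have hnonneg : ∀ s ∈ orderedSimplex n a b, ∀ j, 0 ≤ increments a s j ^ (α j - 1) :=
    fun s hs j => Real.rpow_nonneg (increments_pos hs j).le _
  rw [integral_eq_lintegral_of_nonneg_ae ((ae_restrict_mem hS).mono fun s hs =>
      Finset.prod_nonneg fun j _ => hnonneg s hs j)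
      (Finset.measurable_prod _ fun j _ => by fun_prop).aestronglyMeasurable,
    setLIntegral_congr_fun hS fun s hs => ENNReal.ofReal_prod_of_nonneg fun j _ => hnonneg s hs j,
    lintegral_orderedSimplex_prod_increments_rpow hα hab, ENNReal.toReal_ofReal]
  have hsum : 0 ≤ ∑ j, α j := Finset.sum_nonneg fun j _ => (hα j).le
  exact div_nonneg (mul_nonneg (Real.rpow_nonneg (sub_nonneg.2 hab.le) _)
    (Finset.prod_nonneg fun j _ => (Real.Gamma_pos_of_pos (hα j)).le))
    (Real.Gamma_pos_of_pos (by linarith)).le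

/-- Dirichlet-type integral over the simplex `{t < s₁ < ⋯ < sₙ < t + h}`:
with `s₀ := t`, the integral of `∏ⱼ (sⱼ - sⱼ₋₁)^(-bⱼ)` equals
`h^(n - ∑ bⱼ) · (∏ⱼ Γ(1 - bⱼ)) / Γ(n + 1 - ∑ bⱼ)`. -/
theorem simplex_dirichlet_integral (n : ℕ) (t h : ℝ) (hh : 0 < h)
    (b : Fin n → ℝ) (hb : ∀ j, b j ∈ Set.Ico (0 : ℝ) 1) :
    (∫ s in {s : Fin n → ℝ | StrictMono s ∧ ∀ j, s j ∈ Set.Ioo t (t + h)},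
        ∏ j : Fin n,
          (s j - (if hj : (j : ℕ) = 0 then t else s ⟨(j : ℕ) - 1, by omega⟩)) ^ (-(b j)))
      = h ^ ((n : ℝ) - ∑ j, b j) * (∏ j, Real.Gamma (1 - b j)) /
          Real.Gamma ((n : ℝ) + 1 - ∑ j, b j) := by
  have key := integral_orderedSimplex_prod_increments_rpow (α := fun j => 1 - b j)
    (fun j => sub_pos.2 (hb j).2) (lt_add_of_pos_right t hh)
  simp only [increments_eq_sub_dite, sub_sub_cancel_left, add_sub_cancel_left,
    Finset.sum_sub_distrib, Finset.sum_const, Finset.card_univ, Fintype.card_fin, nsmul_eq_mul,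
    mul_one, sub_add_eq_add_sub] at key
  exact key
end

section
/- Let Q be a real symmetric positive definite n × n matrix with smallest eigenvalue λ₁(Q), let k₁, …, k_n be nonnegative integers, and set K := k₁ + ⋯ + k_n. Then ∫_{ℝⁿ} (∏_{j=1}^n |x_j|^{k_j}) · exp(−½ xᵀ Q x) dx ≤ (det Q)^{−1/2} · λ₁(Q)^{−K/2} · ∫_{ℝⁿ} ‖ξ‖₂^{K} · exp(−½ ‖ξ‖₂²) dξ, where both integrals are with respect to n-dimensional Lebesgue measure and ‖·‖₂ is the Euclidean norm. -/
/-!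
Write `Q = Bᵀ B`. Every coordinate satisfies `|xⱼ| ≤ ‖x‖₂ ≤ λ₁(Q)^{-1/2} ‖B x‖₂`, because
`λ₁(Q) ‖x‖₂² ≤ xᵀ Q x = ‖B x‖₂²`. Hence the integrand is at most
`λ₁(Q)^{-K/2} ‖B x‖₂^K exp(-½ ‖B x‖₂²)`, and the substitution `ξ = B x`, whose Jacobian is
`|det B| = (det Q)^{1/2}`, turns the integral of this majorant into the right-hand side.
-/

open MeasureTheory Matrix Real
open scoped MatrixOrder

variable {ι : Type*} [Fintype ι]

theorem prod_abs_pow_le_sqrt_sum_sq_pow (x : ι → ℝ) (k : ι → ℕ) :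
    ∏ j, |x j| ^ k j ≤ √(∑ i, x i ^ 2) ^ ∑ j, k j := by
  rw [← Finset.prod_pow_eq_pow_sum]
  gcongr with j
  exact abs_le_sqrt (Finset.single_le_sum (fun i _ => sq_nonneg (x i)) (Finset.mem_univ j))

theorem pow_mul_exp_neg_half_sq_le (K : ℕ) {t : ℝ} (ht : 0 ≤ t) :
    t ^ K * exp (-(1/2) * t ^ 2) ≤ K.factorial * exp 1 * exp (-(1/4) * t ^ 2) := by
  have hpow : t ^ K ≤ K.factorial * exp t := by
    have := pow_div_factorial_le_exp t ht K
    rwa [div_le_iff₀ (by positivity), mul_comm] at this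
  calc t ^ K * exp (-(1/2) * t ^ 2) ≤ K.factorial * exp t * exp (-(1/2) * t ^ 2) := by gcongr
    _ = K.factorial * exp (t - (1/4) * t ^ 2) * exp (-(1/4) * t ^ 2) := by
      rw [mul_assoc, mul_assoc, ← exp_add, ← exp_add]; ring_nf
    _ ≤ K.factorial * exp 1 * exp (-(1/4) * t ^ 2) := by
      gcongr; nlinarith [sq_nonneg (t - 2)]

theorem integrable_sqrt_sum_sq_pow_mul_exp (K : ℕ) :
    Integrable (fun ξ : ι → ℝ => √(∑ i, ξ i ^ 2) ^ K * exp (-(1/2) * ∑ i, ξ i ^ 2)) := by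
  have hdom : Integrable (fun ξ : ι → ℝ => K.factorial * exp 1 * ∏ i, exp (-(1/4) * ξ i ^ 2)) :=
    (Integrable.fintype_prod (f := fun _ x => exp (-(1/4) * x ^ 2))
      fun _ => integrable_exp_neg_mul_sq (by norm_num)).const_mul _
  refine hdom.mono' (by fun_prop) (Filter.Eventually.of_forall fun ξ => ?_)
  have hsum : 0 ≤ ∑ i, ξ i ^ 2 := by positivity
  rw [norm_of_nonneg (by positivity), ← exp_sum, ← Finset.mul_sum]
  have := pow_mul_exp_neg_half_sq_le K (sqrt_nonneg (∑ i, ξ i ^ 2))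
  rwa [sq_sqrt hsum] at this

namespace Matrix

theorem dotProduct_star_mul_self_mulVec (B : Matrix ι ι ℝ) (x : ι → ℝ) :
    x ⬝ᵥ (star B * B) *ᵥ x = ∑ i, (B *ᵥ x) i ^ 2 := by
  rw [← mulVec_mulVec, dotProduct_mulVec, star_eq_conjTranspose,
    conjTranspose_eq_transpose_of_trivial, vecMul_transpose]
  simp only [dotProduct, sq]

variable [DecidableEq ι]

theorem det_star_mul_self_rpow_neg_half (B : Matrix ι ι ℝ) :
    (star B * B).det ^ (-(1/2) : ℝ) = |B.det|⁻¹ := by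
  rw [det_mul, star_eq_conjTranspose, det_conjTranspose, star_trivial, ← abs_mul_abs_self, ← sq,
    ← rpow_natCast, ← rpow_mul (abs_nonneg _)]
  norm_num [rpow_neg_one]

theorem IsHermitian.mul_dotProduct_self_le {Q : Matrix ι ι ℝ} (hQ : Q.IsHermitian) {c : ℝ}
    (hc : ∀ i, c ≤ hQ.eigenvalues i) (x : ι → ℝ) : c * (x ⬝ᵥ x) ≤ x ⬝ᵥ Q *ᵥ x := by
  have hle : algebraMap ℝ _ c ≤ Q := by
    rw [algebraMap_le_iff_le_spectrum hQ.isSelfAdjoint, hQ.spectrum_real_eq_range_eigenvalues]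
    rintro _ ⟨i, rfl⟩
    exact hc i
  simpa [Algebra.algebraMap_eq_smul_one, sub_mulVec, dotProduct_sub, smul_mulVec, dotProduct_smul,
    sub_nonneg] using (le_iff.mp hle).dotProduct_mulVec_nonneg x

theorem IsHermitian.prod_abs_pow_le {Q : Matrix ι ι ℝ} (hQ : Q.IsHermitian) {c : ℝ} (hc₀ : 0 < c)
    (hc : ∀ i, c ≤ hQ.eigenvalues i) (x : ι → ℝ) (k : ι → ℕ) :
    ∏ j, |x j| ^ k j ≤ c ^ (-((∑ j, k j : ℕ) : ℝ) / 2) * √(x ⬝ᵥ Q *ᵥ x) ^ ∑ j, k j := by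
  have hnorm : ∑ i, x i ^ 2 ≤ c⁻¹ * (x ⬝ᵥ Q *ᵥ x) := by
    rw [le_inv_mul_iff₀ hc₀]
    simpa only [dotProduct, sq] using hQ.mul_dotProduct_self_le hc x
  have hscale : √c⁻¹ ^ ∑ j, k j = c ^ (-((∑ j, k j : ℕ) : ℝ) / 2) := by
    rw [sqrt_eq_rpow, ← rpow_natCast, ← rpow_mul (inv_nonneg.2 hc₀.le), inv_rpow hc₀.le,
      ← rpow_neg hc₀.le]
    ring_nf
  calc ∏ j, |x j| ^ k j ≤ √(∑ i, x i ^ 2) ^ ∑ j, k j := prod_abs_pow_le_sqrt_sum_sq_pow x k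
    _ ≤ (√c⁻¹ * √(x ⬝ᵥ Q *ᵥ x)) ^ ∑ j, k j := by
      rw [← sqrt_mul (inv_nonneg.2 hc₀.le)]
      gcongr
    _ = c ^ (-((∑ j, k j : ℕ) : ℝ) / 2) * √(x ⬝ᵥ Q *ᵥ x) ^ ∑ j, k j := by rw [mul_pow, hscale]

section ChangeOfVariables

variable {B : Matrix ι ι ℝ} (hB : B.det ≠ 0)
include hB

theorem measurableEmbedding_mulVec : MeasurableEmbedding (B *ᵥ ·) :=
  (toLin' B).continuous_of_finiteDimensional.measurableEmbedding
    (mulVec_injective_iff_isUnit.mpr ((isUnit_iff_isUnit_det B).mpr hB.isUnit))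

theorem map_mulVec_volume :
    (volume : Measure (ι → ℝ)).map (B *ᵥ ·) = ENNReal.ofReal |B.det⁻¹| • volume :=
  Real.map_matrix_volume_pi_eq_smul_volume_pi hB

theorem integral_comp_mulVec {E : Type*} [NormedAddCommGroup E] [NormedSpace ℝ E]
    (g : (ι → ℝ) → E) : ∫ x, g (B *ᵥ x) = |B.det|⁻¹ • ∫ ξ, g ξ := by
  rw [← (measurableEmbedding_mulVec hB).integral_map, map_mulVec_volume hB, integral_smul_measure,
    abs_inv, ENNReal.toReal_ofReal (by positivity)]

theorem integrable_comp_mulVec {E : Type*} [NormedAddCommGroup E] {g : (ι → ℝ) → E}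
    (hg : Integrable g) : Integrable (fun x => g (B *ᵥ x)) := by
  rw [← Function.comp_def, ← (measurableEmbedding_mulVec hB).integrable_map_iff,
    map_mulVec_volume hB]
  exact hg.smul_measure ENNReal.ofReal_ne_top

end ChangeOfVariables

end Matrix

theorem gaussian_moment_integral_bound_general (n : ℕ) (hn : 0 < n)
    (Q : Matrix (Fin n) (Fin n) ℝ) (hQ : Q.PosDef)
    (k : Fin n → ℕ) :
    (∫ x : Fin n → ℝ,
        (∏ j : Fin n, |x j| ^ (k j)) * Real.exp (-(1/2) * dotProduct x (Q.mulVec x)))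
      ≤ (Q.det) ^ (-(1/2) : ℝ) *
          (Finset.univ.inf' ⟨⟨0, hn⟩, Finset.mem_univ _⟩ hQ.isHermitian.eigenvalues)
            ^ (-((∑ j, k j : ℕ) : ℝ) / 2) *
          ∫ ξ : Fin n → ℝ,
            Real.sqrt (∑ i, ξ i ^ 2) ^ (∑ j, k j) *
              Real.exp (-(1/2) * ∑ i, ξ i ^ 2) := by
  set lam := Finset.univ.inf' ⟨⟨0, hn⟩, Finset.mem_univ _⟩ hQ.isHermitian.eigenvalues
  set g : (Fin n → ℝ) → ℝ := fun ξ => √(∑ i, ξ i ^ 2) ^ (∑ j, k j) * exp (-(1/2) * ∑ i, ξ i ^ 2)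
  have hlam : 0 < lam := (Finset.lt_inf'_iff _).mpr fun i _ => hQ.eigenvalues_pos i
  have hle : ∀ i, lam ≤ hQ.isHermitian.eigenvalues i := fun i => Finset.inf'_le _ (Finset.mem_univ i)
  obtain ⟨B, hQB⟩ := CStarAlgebra.nonneg_iff_eq_star_mul_self.mp hQ.posSemidef.nonneg
  have hB : B.det ≠ 0 := by
    have := hQ.det_pos
    rw [hQB, det_mul, star_eq_conjTranspose, det_conjTranspose, star_trivial] at this
    exact left_ne_zero_of_mul this.ne'
  have hpt : ∀ x : Fin n → ℝ, (∏ j, |x j| ^ k j) * exp (-(1/2) * x ⬝ᵥ Q *ᵥ x)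
      ≤ lam ^ (-((∑ j, k j : ℕ) : ℝ) / 2) * g (B *ᵥ x) := fun x => by
    simp only [g, ← dotProduct_star_mul_self_mulVec, ← hQB, ← mul_assoc]
    gcongr
    exact hQ.isHermitian.prod_abs_pow_le hlam hle x k
  calc _ ≤ ∫ x, lam ^ (-((∑ j, k j : ℕ) : ℝ) / 2) * g (B *ᵥ x) :=
        integral_mono_of_nonneg (Filter.Eventually.of_forall fun x => by positivity)
          ((integrable_comp_mulVec hB (integrable_sqrt_sum_sq_pow_mul_exp _)).const_mul _)
          (Filter.Eventually.of_forall hpt)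
    _ = _ := by
      rw [integral_const_mul, integral_comp_mulVec hB, smul_eq_mul, hQB,
        det_star_mul_self_rpow_neg_half]
      ring

/-- For a real symmetric positive definite `n × n` matrix `Q` with smallest
eigenvalue `λ₁(Q)`, nonnegative integers `k₁, …, kₙ` with `K := k₁ + ⋯ + kₙ`:
`∫_{ℝⁿ} (∏ⱼ |xⱼ|^{kⱼ}) e^{-½ xᵀQx} dx
  ≤ (det Q)^{-1/2} λ₁(Q)^{-K/2} ∫_{ℝⁿ} ‖ξ‖₂^K e^{-½‖ξ‖₂²} dξ`. -/
theorem gaussian_moment_integral_bound (n : ℕ) (hn : 0 < n)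
    (Q : Matrix (Fin n) (Fin n) ℝ) (hsymm : Q.IsSymm) (hQ : Q.PosDef)
    (k : Fin n → ℕ) :
    (∫ x : Fin n → ℝ,
        (∏ j : Fin n, |x j| ^ (k j)) * Real.exp (-(1/2) * dotProduct x (Q.mulVec x)))
      ≤ (Q.det) ^ (-(1/2) : ℝ) *
          (Finset.univ.inf' ⟨⟨0, hn⟩, Finset.mem_univ _⟩ hQ.isHermitian.eigenvalues)
            ^ (-((∑ j, k j : ℕ) : ℝ) / 2) *
          ∫ ξ : Fin n → ℝ,
            Real.sqrt (∑ i, ξ i ^ 2) ^ (∑ j, k j) *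
              Real.exp (-(1/2) * ∑ i, ξ i ^ 2) :=
  gaussian_moment_integral_bound_general n hn Q hQ k
end
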